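/- Fix r ∈ (0,1]. The function g ↦ ((1−2g)r)² − E(4g r²/(1+r⁴))² is strictly decreasing on [0,1/2). (This is the monogamy score M₂ = E_a² − E₁₂² − E₁₃² − E₂₃² of the non-generic GHZ-class state ψ(g₁,0,0,r): here E_a = (1−2g₁)r, E₁₂ = E₁₃ = 0 and E₂₃ = E(4g₁r²/(1+r⁴)).) -/

import Mathlib

/-- Binary Shannon entropy (base 2), with the convention `0 * log₂ 0 = 0`
(automatic since `Real.logb 2 0 = 0`). -/
noncomputable def binEntropy (p : ℝ) : ℝ :=
  -p * Real.logb 2 p - (1 - p) * Real.logb 2 (1 - p)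

/-- Entanglement-of-formation function of the concurrence `C`. -/
noncomputable def eof (C : ℝ) : ℝ :=
  binEntropy ((1 + Real.sqrt (1 - C ^ 2)) / 2)

/-!
`((1 - 2g) r)²` is the square of a positive, strictly decreasing function of `g`, while the
concurrence `4 g r² / (1 + r⁴)` increases with `g`. On `C ≥ 0`, `E` is nonnegative and
nondecreasing: `(1 + √(1 - C²)) / 2` decreases and stays in `[1/2, 1]`, where the binary entropy
is decreasing. So the subtracted term `E²` is nondecreasing.
-/

open Set

lemma binEntropy_eq_div_log_two (p : ℝ) : binEntropy p = Real.binEntropy p / Real.log 2 := by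
  rw [binEntropy, Real.binEntropy, Real.log_inv, Real.log_inv, Real.logb, Real.logb]
  ring

lemma eof_eq_binEntropy_div_log_two (C : ℝ) :
    eof C = Real.binEntropy ((1 + √(1 - C ^ 2)) / 2) / Real.log 2 :=
  binEntropy_eq_div_log_two _

lemma one_add_sqrt_one_sub_sq_div_two_mem_Icc (C : ℝ) :
    (1 + √(1 - C ^ 2)) / 2 ∈ Icc 2⁻¹ 1 := by
  have h₀ : 0 ≤ √(1 - C ^ 2) := Real.sqrt_nonneg _
  have h₁ : √(1 - C ^ 2) ≤ 1 := Real.sqrt_le_one.mpr (by nlinarith [sq_nonneg C])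
  constructor <;> linarith

lemma eof_nonneg (C : ℝ) : 0 ≤ eof C := by
  obtain ⟨h₀, h₁⟩ := one_add_sqrt_one_sub_sq_div_two_mem_Icc C
  rw [eof_eq_binEntropy_div_log_two]
  exact div_nonneg (Real.binEntropy_nonneg (by linarith) h₁) (Real.log_nonneg one_le_two)

lemma eof_monotoneOn : MonotoneOn eof (Ici 0) := by
  intro a ha b _ hab
  have hsqrt : √(1 - b ^ 2) ≤ √(1 - a ^ 2) :=
    Real.sqrt_le_sqrt (by nlinarith [mem_Ici.mp ha])
  rw [eof_eq_binEntropy_div_log_two, eof_eq_binEntropy_div_log_two]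
  gcongr
  exact Real.binEntropy_strictAntiOn.antitoneOn (one_add_sqrt_one_sub_sq_div_two_mem_Icc b)
    (one_add_sqrt_one_sub_sq_div_two_mem_Icc a) (by linarith)

lemma strictAntiOn_sq_one_sub_two_mul_mul {r : ℝ} (hr : r ≠ 0) :
    StrictAntiOn (fun g : ℝ => ((1 - 2 * g) * r) ^ 2) (Iic (1 / 2)) := by
  intro a _ b hb hab
  have hb' : 0 ≤ 1 - 2 * b := by linarith [mem_Iic.mp hb]
  simp only [mul_pow]
  gcongr

lemma sq_eof_monotoneOn : MonotoneOn (fun C => eof C ^ 2) (Ici 0) :=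
  fun a ha _ hb hab => pow_le_pow_left₀ (eof_nonneg a) (eof_monotoneOn ha hb hab) 2

/-- For fixed `r ∈ (0,1]`, the monogamy score
`g ↦ ((1-2g)r)² - E(4gr²/(1+r⁴))²` of the non-generic GHZ-class state
`ψ(g,0,0,r)` is strictly decreasing on `[0,1/2)`. -/
theorem accessible_monogamy_score_strictAnti (r : ℝ) (hr : r ∈ Set.Ioc (0 : ℝ) 1) :
    StrictAntiOn
      (fun g : ℝ => ((1 - 2 * g) * r) ^ 2 - (eof (4 * g * r ^ 2 / (1 + r ^ 4))) ^ 2)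
      (Set.Ico (0 : ℝ) (1 / 2)) := by
  set concurrence := fun g : ℝ => 4 * g * r ^ 2 / (1 + r ^ 4)
  have hC_mono : MonotoneOn concurrence (Ici 0) := fun a _ b _ hab => by
    simp only [concurrence]
    gcongr
  have hC_nonneg : MapsTo concurrence (Ici 0) (Ici 0) := fun g (hg : 0 ≤ g) => by
    simp only [concurrence, mem_Ici]
    positivity
  have hE : MonotoneOn (fun g => eof (concurrence g) ^ 2) (Ici 0) :=
    sq_eof_monotoneOn.comp hC_mono hC_nonneg
  have hEa : StrictAntiOn (fun g : ℝ => ((1 - 2 * g) * r) ^ 2) (Ico 0 (1 / 2)) :=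
    (strictAntiOn_sq_one_sub_two_mul_mul hr.1.ne').mono
      (Ico_subset_Iio_self.trans Iio_subset_Iic_self)
  simpa only [sub_eq_add_neg] using hEa.add_antitone (hE.mono Ico_subset_Ici_self).neg
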